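/- Let A be a C*-algebra regarded as a real vector space in duality with its dual A' via ⟨a,φ⟩ := Re φ(a). Then the one-sided polar of the positive cone A₊ is (A₊)° = −A₊' + i·(A')_sa, where A₊' is the cone of positive functionals and (A')_sa the real subspace of self-adjoint functionals. -/

import Mathlib

/-! Since `A₊` is closed under positive scaling, `φ` lies in its polar iff `Re φ ≤ 0` on `A₊`.
Every functional splits as `φ = ℜ φ + i ℑ φ` into self-adjoint parts for the involution
`φ* a = conj (φ (a*))`. On a self-adjoint element `x`, `(ℜ φ) x = Re (φ x)` and `i (ℑ φ) x` is
purely imaginary, so `Re φ ≤ 0` on `A₊` says exactly that `-ℜ φ` is positive. -/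

open Pointwise ComplexOrder WithConv ComplexStarModule

lemma re_apply_star_mul_self_nonpos {A : Type*} [NonUnitalRing A] [StarRing A] [Module ℂ A]
    [StarModule ℂ A] [IsScalarTower ℂ A A] [SMulCommClass ℂ A A] [TopologicalSpace A]
    {φ : A →L[ℂ] ℂ} (h : ∀ a, (φ (star a * a)).re ≤ 1) (a : A) :
    (φ (star a * a)).re ≤ 0 := by
  by_contra! hpos
  set r := (φ (star a * a)).re
  -- scaling `a` by `t` makes the real part `t² r = 2`
  set t := √(2 / r)
  have hscale : star ((t : ℂ) • a) * ((t : ℂ) • a) = ((t * t : ℝ) : ℂ) • (star a * a) := by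
    rw [star_smul, smul_mul_smul_comm, Complex.star_def, Complex.conj_ofReal, Complex.ofReal_mul]
  have htt : t * t = 2 / r := Real.mul_self_sqrt (by positivity)
  have := h ((t : ℂ) • a)
  rw [hscale, map_smul, smul_eq_mul, Complex.re_ofReal_mul, htt,
    div_mul_cancel₀ _ hpos.ne'] at this
  norm_num at this

lemma realPart_toConv_apply_of_isSelfAdjoint {A : Type*} [NonUnitalRing A] [StarRing A]
    [Module ℂ A] [StarModule ℂ A] [TopologicalSpace A] [ContinuousStar A] (φ : A →L[ℂ] ℂ) {x : A}
    (hx : IsSelfAdjoint x) :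
    (ℜ (toConv φ) : WithConv (A →L[ℂ] ℂ)) x = (φ x).re := by
  rw [realPart_apply_coe]
  simp [hx.star_eq, ← mul_add, Complex.add_conj]

lemma im_apply_eq_zero_of_map_star {A : Type*} [AddCommMonoid A] [Module ℂ A] [Star A]
    [TopologicalSpace A] {χ : A →L[ℂ] ℂ} (hχ : ∀ a, χ (star a) = starRingEnd ℂ (χ a))
    {x : A} (hx : IsSelfAdjoint x) : (χ x).im = 0 := by
  rw [← Complex.conj_eq_iff_im, ← hχ, hx.star_eq]

theorem polar_positive_cone_cstar
    {A : Type*} [NormedRing A] [StarRing A] [CStarRing A]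
    [NormedAlgebra ℂ A] [StarModule ℂ A] :
    {φ : A →L[ℂ] ℂ | ∀ x ∈ {x : A | ∃ a : A, x = star a * a}, (φ x).re ≤ 1} =
      (-{φ : A →L[ℂ] ℂ | ∀ a : A, 0 ≤ φ (star a * a)}) +
        Complex.I • {φ : A →L[ℂ] ℂ | ∀ a : A, φ (star a) = starRingEnd ℂ (φ a)} := by
  ext φ
  simp only [Set.mem_ofPred_eq, Set.mem_add, Set.mem_neg, Set.mem_smul_set, forall_exists_index,
    forall_eq_apply_imp_iff]
  constructor
  · intro h
    have hφ := re_apply_star_mul_self_nonpos h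
    refine ⟨ofConv (ℜ (toConv φ)), fun a ↦ ?_, _, ⟨ofConv (ℑ (toConv φ)), ?_, rfl⟩,
      congrArg ofConv (realPart_add_I_smul_imaginaryPart (toConv φ))⟩
    · rw [neg_apply, realPart_toConv_apply_of_isSelfAdjoint φ (.star_mul_self a),
        ← Complex.ofReal_neg, Complex.zero_le_real]
      linarith [hφ a]
    · exact (ContinuousLinearMap.IntrinsicStar.isSelfAdjoint_iff_map_star _).mp (ℑ (toConv φ)).2
  · rintro ⟨ψ, hψ, _, ⟨χ, hχ, rfl⟩, rfl⟩ a
    have hψa : (ψ (star a * a)).re ≤ 0 := by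
      simpa using (Complex.le_def.mp (hψ a)).1
    have hχa := im_apply_eq_zero_of_map_star hχ (.star_mul_self a)
    simp only [add_apply, smul_apply, smul_eq_mul, Complex.add_re, Complex.I_mul_re, hχa]
    linarith
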